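/- Let R be a ring, 𝓕 a torsion notion, M an 𝓕-torsion-free R-module, S a submodule, and S̄ = {m : ∃ A ∈ 𝓕, A•m ⊆ S}. Then S̄ is the least submodule T ⊇ S such that M/T is 𝓕-torsion-free: for any submodule T with S ⊆ T and M/T 𝓕-torsion-free, S̄ ⊆ T. -/

import Mathlib

/-!
If `A = (X) ∈ 𝓕` and every `x • m` with `x ∈ X` is sent into `S` by some `B_x ∈ 𝓕`, then
directedness gives one `C = (Y) ∈ 𝓕` below all the `B_x`, and the product ideal `(YX) ∈ 𝓕`
sends `m` into `S`, since `(y x) • m = y • (x • m)`. Minimality is immediate: if `A • m ⊆ S ⊆ T`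
then `m + T` is torsion in `M/T`.
-/

/-- A torsion notion for a ring `R`: a nonempty collection of finitely generated
left ideals that is upward closed among finitely generated left ideals,
downward directed, closed under generation by products of finite generating
sets, satisfies the translation condition (4), and whose members are regular. -/
structure TorsionNotion (R : Type*) [Ring R] where
  F : Set (Ideal R)
  nonempty : F.Nonempty
  fg : ∀ A ∈ F, A.FG
  upward : ∀ A ∈ F, ∀ B : Ideal R, B.FG → A ≤ B → B ∈ F
  directed : ∀ A ∈ F, ∀ B ∈ F, ∃ C ∈ F, C ≤ A ∧ C ≤ B
  prod : ∀ X Y : Finset R, Ideal.span (X : Set R) ∈ F → Ideal.span (Y : Set R) ∈ F →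
      Ideal.span {r : R | ∃ x ∈ X, ∃ y ∈ Y, r = x * y} ∈ F
  cond4 : ∀ A ∈ F, ∀ r : R, ∃ B ∈ F, ∀ b ∈ B, b * r ∈ A
  reg : ∀ A ∈ F, ∀ r : R, (∀ a ∈ A, a * r = 0) → r = 0

theorem Submodule.smul_mem_of_mem_span {R M : Type*} [Ring R] [AddCommGroup M] [Module R M]
    {S : Submodule R M} {m : M} {s : Set R} (h : ∀ r ∈ s, r • m ∈ S) :
    ∀ r ∈ Ideal.span s, r • m ∈ S :=
  Submodule.span_le (p := S.comap (LinearMap.toSpanSingleton R M m)).mpr h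

namespace TorsionNotion

variable {R : Type*} [Ring R] (𝓕 : TorsionNotion R)

theorem exists_le_of_forall_mem {ι : Type*} (s : Finset ι) (g : ι → Ideal R)
    (hg : ∀ i ∈ s, g i ∈ 𝓕.F) : ∃ C ∈ 𝓕.F, ∀ i ∈ s, C ≤ g i := by
  classical
  induction s using Finset.induction_on with
  | empty =>
    obtain ⟨C, hC⟩ := 𝓕.nonempty
    exact ⟨C, hC, by simp⟩
  | insert a s _ ih =>
    obtain ⟨C, hC, hCg⟩ := ih fun i hi => hg i (Finset.mem_insert_of_mem hi)
    obtain ⟨D, hD, hDC, hDa⟩ := 𝓕.directed C hC (g a) (hg a (Finset.mem_insert_self a s))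
    refine ⟨D, hD, fun i hi => ?_⟩
    rcases Finset.mem_insert.mp hi with rfl | hi
    · exact hDa
    · exact hDC.trans (hCg i hi)

variable {M : Type*} [AddCommGroup M] [Module R M]

/-- The paper's `S̄`. -/
def closure (S : Submodule R M) : Set M :=
  {x | ∃ B ∈ 𝓕.F, ∀ b ∈ B, b • x ∈ S}

theorem mem_closure_of_smul_mem_closure {S : Submodule R M} {m : M} {A : Ideal R}
    (hA : A ∈ 𝓕.F) (hAm : ∀ a ∈ A, a • m ∈ 𝓕.closure S) : m ∈ 𝓕.closure S := by
  classical
  obtain ⟨X, rfl⟩ := 𝓕.fg A hA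
  choose! B hBF hBS using fun x (hx : x ∈ X) => hAm x (Ideal.subset_span hx)
  obtain ⟨C, hC, hCB⟩ := 𝓕.exists_le_of_forall_mem X B hBF
  obtain ⟨Y, rfl⟩ := 𝓕.fg C hC
  refine ⟨_, 𝓕.prod Y X hC hA, Submodule.smul_mem_of_mem_span ?_⟩
  rintro _ ⟨y, hy, x, hx, rfl⟩
  rw [mul_smul]
  exact hBS x hx y (hCB x hx (Ideal.subset_span hy))

theorem closure_subset {S T : Submodule R M} (hST : S ≤ T)
    (hT : ∀ m : M, ∀ A ∈ 𝓕.F, (∀ a ∈ A, a • m ∈ T) → m ∈ T) : 𝓕.closure S ⊆ T :=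
  fun m ⟨B, hB, hBm⟩ => hT m B hB fun b hb => hST (hBm b hb)

end TorsionNotion

theorem stmt_13_general (R : Type*) [Ring R] (𝓕 : TorsionNotion R)
    (M : Type*) [AddCommGroup M] [Module R M]
    (S : Submodule R M) :
    (∀ m : M, ∀ A ∈ 𝓕.F,
        (∀ a ∈ A, a • m ∈ {x : M | ∃ B ∈ 𝓕.F, ∀ b ∈ B, b • x ∈ S}) →
        m ∈ {x : M | ∃ B ∈ 𝓕.F, ∀ b ∈ B, b • x ∈ S}) ∧
      (∀ T : Submodule R M, S ≤ T →
        (∀ m : M, ∀ A ∈ 𝓕.F, (∀ a ∈ A, a • m ∈ T) → m ∈ T) →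
        ∀ m ∈ {x : M | ∃ B ∈ 𝓕.F, ∀ b ∈ B, b • x ∈ S}, m ∈ T) :=
  ⟨fun _ _ hA hAm => 𝓕.mem_closure_of_smul_mem_closure hA hAm,
    fun _ hST hT => 𝓕.closure_subset hST hT⟩

/-- `S̄ = {m | ∃ A ∈ 𝓕, A•m ⊆ S}` is the least submodule `T ⊇ S`
with `M/T` `𝓕`-torsion-free: (a) `M/S̄` is `𝓕`-torsion-free, and (b) any `T ⊇ S`
with `M/T` `𝓕`-torsion-free contains `S̄`. -/
theorem stmt_13 (R : Type*) [Ring R] (𝓕 : TorsionNotion R)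
    (M : Type*) [AddCommGroup M] [Module R M]
    (hM : ∀ m : M, ∀ A ∈ 𝓕.F, (∀ a ∈ A, a • m = 0) → m = 0)
    (S : Submodule R M) :
    (∀ m : M, ∀ A ∈ 𝓕.F,
        (∀ a ∈ A, a • m ∈ {x : M | ∃ B ∈ 𝓕.F, ∀ b ∈ B, b • x ∈ S}) →
        m ∈ {x : M | ∃ B ∈ 𝓕.F, ∀ b ∈ B, b • x ∈ S}) ∧
      (∀ T : Submodule R M, S ≤ T →
        (∀ m : M, ∀ A ∈ 𝓕.F, (∀ a ∈ A, a • m ∈ T) → m ∈ T) →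
        ∀ m ∈ {x : M | ∃ B ∈ 𝓕.F, ∀ b ∈ B, b • x ∈ S}, m ∈ T) :=
  stmt_13_general R 𝓕 M S
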